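/- arXiv:1602.05861 — 2 statements merged into one kernel-verified Lean document; each statement's English description precedes it below -/
import Mathlib

section
/- Let G : ℝ^{n-1} → ℝ be a C² function with G(0) = 0 and ∇G(0) = 0, and let M > 0 bound the operator norm of the Hessian of G on the ball of radius 1. Then there is a constant C (depending only on M) such that for all ξ' with |ξ'| ≤ δ^μ ≤ 1/2 and all θ ∈ [0, δ^{ε/2}] with δ ∈ (0,1], μ > 0, ε > 0, one has |(1+θ)G(ξ') − G((1+θ)ξ')| ≤ C δ^{2μ + ε/2}. -/
/-!
Both `G ξ` and `G ((1 + θ) • ξ)` are `O(|ξ|²)`: the Hessian bound makes `∇G` grow at most linearly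
from `∇G 0 = 0`, hence `G` grows at most quadratically from `G 0 = 0`. Writing
`(1 + θ) G ξ - G ((1 + θ) ξ) = θ G ξ - (G ((1 + θ) ξ) - G ξ)`, the first term is `O(θ |ξ|²)`, and the
second is at most `sup |∇G| = O(|ξ|)` on the segment times its length `θ |ξ|`. With `|ξ| ≤ δ^μ` and
`θ ≤ δ^{ε/2}` this is `O(δ^{2μ + ε/2})`.
-/

open Metric InnerProductSpace

section Gradient

variable {F : Type*} [NormedAddCommGroup F] [InnerProductSpace ℝ F] [CompleteSpace F]

theorem norm_gradient (f : F → ℝ) (x : F) : ‖gradient f x‖ = ‖fderiv ℝ f x‖ := by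
  rw [← toDual_gradient, LinearIsometryEquiv.norm_map]

theorem ContDiff.contDiff_gradient {f : F → ℝ} {m n : WithTop ℕ∞} (hf : ContDiff ℝ n f)
    (hmn : m + 1 ≤ n) : ContDiff ℝ m (gradient f) :=
  (toDual ℝ F).symm.toContinuousLinearEquiv.contDiff.comp (hf.fderiv_right hmn)

end Gradient

section GrowthFromDerivative

variable {E F : Type*} [NormedAddCommGroup E] [NormedSpace ℝ E] [NormedAddCommGroup F]
  [NormedSpace ℝ F] {f : E → F} {r M : ℝ}

theorem norm_le_mul_norm_of_norm_fderiv_le (hf : ∀ y ∈ closedBall (0 : E) r, DifferentiableAt ℝ f y)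
    (hf0 : f 0 = 0) (hbound : ∀ y ∈ closedBall (0 : E) r, ‖fderiv ℝ f y‖ ≤ M) {x : E}
    (hx : x ∈ closedBall 0 r) : ‖f x‖ ≤ M * ‖x‖ := by
  simpa [hf0] using (convex_closedBall (0 : E) r).norm_image_sub_le_of_norm_fderiv_le hf hbound
    (mem_closedBall_self (dist_nonneg.trans hx)) hx

theorem norm_sub_le_of_norm_fderiv_le_mul_norm (hM : 0 ≤ M)
    (hf : ∀ y ∈ closedBall (0 : E) r, DifferentiableAt ℝ f y)
    (hbound : ∀ y ∈ closedBall (0 : E) r, ‖fderiv ℝ f y‖ ≤ M * ‖y‖) {x y : E}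
    (hx : x ∈ closedBall 0 r) (hy : y ∈ closedBall 0 r) : ‖f x - f y‖ ≤ M * r * ‖x - y‖ :=
  (convex_closedBall (0 : E) r).norm_image_sub_le_of_norm_fderiv_le hf
    (fun z hz => (hbound z hz).trans (mul_le_mul_of_nonneg_left (mem_closedBall_zero_iff.1 hz) hM))
    hy hx

theorem norm_le_mul_norm_sq_of_norm_fderiv_le_mul_norm (hM : 0 ≤ M)
    (hf : ∀ y ∈ closedBall (0 : E) r, DifferentiableAt ℝ f y) (hf0 : f 0 = 0)
    (hbound : ∀ y ∈ closedBall (0 : E) r, ‖fderiv ℝ f y‖ ≤ M * ‖y‖) {x : E}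
    (hx : x ∈ closedBall 0 r) : ‖f x‖ ≤ M * ‖x‖ ^ 2 := by
  have hsub : closedBall (0 : E) ‖x‖ ⊆ closedBall 0 r :=
    closedBall_subset_closedBall (mem_closedBall_zero_iff.1 hx)
  have h := norm_sub_le_of_norm_fderiv_le_mul_norm hM (fun y hy => hf y (hsub hy))
    (fun y hy => hbound y (hsub hy)) (mem_closedBall_zero_iff.2 le_rfl)
    (mem_closedBall_self (norm_nonneg x))
  rw [hf0, sub_zero, sub_zero] at h
  linarith

end GrowthFromDerivative

theorem abs_one_add_mul_sub_apply_smul_le {E : Type*} [NormedAddCommGroup E] [NormedSpace ℝ E]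
    {G : E → ℝ} {M θ : ℝ} (hM : 0 ≤ M)
    (hG : ∀ y ∈ closedBall (0 : E) 1, DifferentiableAt ℝ G y) (hG0 : G 0 = 0)
    (hbound : ∀ y ∈ closedBall (0 : E) 1, ‖fderiv ℝ G y‖ ≤ M * ‖y‖) {ξ : E}
    (hξ : 2 * ‖ξ‖ ≤ 1) (hθ0 : 0 ≤ θ) (hθ1 : θ ≤ 1) :
    |(1 + θ) * G ξ - G ((1 + θ) • ξ)| ≤ 3 * M * θ * ‖ξ‖ ^ 2 := by
  set r := (1 + θ) * ‖ξ‖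
  have hr : r ≤ 1 := by nlinarith [norm_nonneg ξ]
  have hsub : closedBall (0 : E) r ⊆ closedBall 0 1 := closedBall_subset_closedBall hr
  have hnorm_smul : ‖(1 + θ) • ξ‖ = r := by
    rw [norm_smul, Real.norm_of_nonneg (by linarith)]
  have hξr : ξ ∈ closedBall (0 : E) r := mem_closedBall_zero_iff.2 (by nlinarith [norm_nonneg ξ])
  have hquad : |G ξ| ≤ M * ‖ξ‖ ^ 2 :=
    norm_le_mul_norm_sq_of_norm_fderiv_le_mul_norm hM hG hG0 hbound (hsub hξr)
  have hincr : |G ((1 + θ) • ξ) - G ξ| ≤ M * r * (θ * ‖ξ‖) := by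
    have h := norm_sub_le_of_norm_fderiv_le_mul_norm hM (fun y hy => hG y (hsub hy))
      (fun y hy => hbound y (hsub hy)) (mem_closedBall_zero_iff.2 hnorm_smul.le) hξr
    have hdiff : (1 + θ) • ξ - ξ = θ • ξ := by rw [add_smul, one_smul, add_sub_cancel_left]
    rwa [hdiff, norm_smul, Real.norm_of_nonneg hθ0, Real.norm_eq_abs] at h
  calc |(1 + θ) * G ξ - G ((1 + θ) • ξ)| = |θ * G ξ - (G ((1 + θ) • ξ) - G ξ)| := by ring_nf
    _ ≤ θ * |G ξ| + |G ((1 + θ) • ξ) - G ξ| :=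
      (abs_sub _ _).trans_eq (by rw [abs_mul, abs_of_nonneg hθ0])
    _ ≤ θ * (M * ‖ξ‖ ^ 2) + M * r * (θ * ‖ξ‖) := by gcongr
    _ ≤ θ * (M * ‖ξ‖ ^ 2) + M * (2 * ‖ξ‖) * (θ * ‖ξ‖) := by
      gcongr
      nlinarith [norm_nonneg ξ]
    _ = 3 * M * θ * ‖ξ‖ ^ 2 := by ring

theorem stmt_2_general (n : ℕ) (M : ℝ) (hM : 0 < M) :
    ∃ C > (0 : ℝ),
      ∀ G : EuclideanSpace ℝ (Fin (n - 1)) → ℝ,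
        ContDiff ℝ 2 G → G 0 = 0 → gradient G 0 = 0 →
        (∀ x : EuclideanSpace ℝ (Fin (n - 1)), ‖x‖ ≤ 1 →
          ‖fderiv ℝ (gradient G) x‖ ≤ M) →
        ∀ (δ μ ε θ : ℝ) (ξ : EuclideanSpace ℝ (Fin (n - 1))),
          0 < δ → δ ≤ 1 → 0 < μ → 0 < ε →
          ‖ξ‖ ≤ δ ^ μ → δ ^ μ ≤ 1 / 2 → 0 ≤ θ → θ ≤ δ ^ (ε / 2) →
          |(1 + θ) * G ξ - G ((1 + θ) • ξ)| ≤ C * δ ^ (2 * μ + ε / 2) := by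
  refine ⟨3 * M, by positivity, ?_⟩
  intro G hG hG0 hgrad0 hHess δ μ ε θ ξ hδ hδ1 _ hε hξ hhalf hθ0 hθ
  have hgrad : ∀ y ∈ closedBall 0 1, ‖gradient G y‖ ≤ M * ‖y‖ := fun y hy =>
    norm_le_mul_norm_of_norm_fderiv_le (fun z _ =>
      ((hG.contDiff_gradient (m := 1) (by norm_num)).differentiable one_ne_zero) z)
      hgrad0 (fun z hz => hHess z (mem_closedBall_zero_iff.1 hz)) hy
  have hθ1 : θ ≤ 1 := hθ.trans (Real.rpow_le_one hδ.le hδ1 (by positivity))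
  have key := abs_one_add_mul_sub_apply_smul_le hM.le
    (fun y _ => (hG.differentiable (by norm_num)) y) hG0
    (fun y hy => (norm_gradient G y).symm.trans_le (hgrad y hy)) (by linarith) hθ0 hθ1
  calc |(1 + θ) * G ξ - G ((1 + θ) • ξ)| ≤ 3 * M * θ * ‖ξ‖ ^ 2 := key
    _ ≤ 3 * M * δ ^ (ε / 2) * (δ ^ μ) ^ 2 := by gcongr
    _ = 3 * M * δ ^ (2 * μ + ε / 2) := by
      rw [Real.rpow_add hδ, two_mul, Real.rpow_add hδ]; ring

/-- `|(1+θ)G(ξ') − G((1+θ)ξ')| ≤ C δ^{2μ+ε/2}` for `|ξ'| ≤ δ^μ ≤ 1/2`,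
`0 ≤ θ ≤ δ^{ε/2}`, with `C` depending only on the Hessian bound `M`. -/
theorem stmt_2 (n : ℕ) (hn : 2 ≤ n) (M : ℝ) (hM : 0 < M) :
    ∃ C > (0 : ℝ),
      ∀ G : EuclideanSpace ℝ (Fin (n - 1)) → ℝ,
        ContDiff ℝ 2 G → G 0 = 0 → gradient G 0 = 0 →
        (∀ x : EuclideanSpace ℝ (Fin (n - 1)), ‖x‖ ≤ 1 →
          ‖fderiv ℝ (gradient G) x‖ ≤ M) →
        ∀ (δ μ ε θ : ℝ) (ξ : EuclideanSpace ℝ (Fin (n - 1))),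
          0 < δ → δ ≤ 1 → 0 < μ → 0 < ε →
          ‖ξ‖ ≤ δ ^ μ → δ ^ μ ≤ 1 / 2 → 0 ≤ θ → θ ≤ δ ^ (ε / 2) →
          |(1 + θ) * G ξ - G ((1 + θ) • ξ)| ≤ C * δ ^ (2 * μ + ε / 2) :=
  stmt_2_general n M hM
end

section
/- Convex combination parametrization of the truncated cone piece: let P₀(ξ') = (ξ', G₀(ξ'), 0, …, 0) ∈ ℝ^{n+k} and P_j(ξ') = (h_j(ξ'), G_j(h_j(ξ')), e_j) ∈ ℝ^{n+k} for j = 1, …, k, where e_j ∈ ℝ^k is the j-th standard basis vector, G₀, G_j, h_j are as in the k-cone setup with the estimates |h_j(ξ') − ξ'| ≤ L|ξ'|, |G₀(ξ')| ≤ M|ξ'|², |G_j(h_j(ξ'))| ≤ M'|ξ'|², and G₀ having M-bounded Hessian with ∇G₀(0) = 0. Then every point of the set {(1 − Σ_j θ_j) P₀(ξ') + Σ_j θ_j P_j(ξ') : |ξ'| ≤ δ^μ, 0 ≤ θ_j ≤ δ^{ε/2}} is within distance C δ^{2μ + ε/2} of the cylinder {(η', G₀(η'), t) : |η'| ≤ 2δ^μ,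 t ∈ [0, δ^{ε/2}]^k}, where C depends only on M, M', L, k. -/
/-!
The first `n - 1` coordinates of the cone point are `η = (1 - Σθ_j) ξ + Σθ_j h_j(ξ)` and its last
`k` coordinates are `θ`, so it lies right above the cylinder point `(η, G₀(η), θ)`, and the distance
is the gap in the `n`-th coordinate. Since `‖η - ξ‖ ≲ δ^{μ+ε/2}` and `|∇G₀| ≲ δ^μ` near `ξ`,
`G₀(η)` differs from `G₀(ξ)` by `O(δ^{2μ+ε/2})`. The `n`-th coordinate of the cone point is the same
convex combination of `G₀(ξ)` and the `G_j(h_j(ξ))`, and each of these is `O(δ^{2μ})`, so it also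
differs from `G₀(ξ)` by `O(δ^{2μ+ε/2})`.
-/

open InnerProductSpace Metric

section Gradient

variable {E : Type*} [NormedAddCommGroup E] [InnerProductSpace ℝ E] [CompleteSpace E]
  {f : E → ℝ} {M r : ℝ}

lemma differentiable_gradient_of_contDiff_two (hf : ContDiff ℝ 2 f) :
    Differentiable ℝ (gradient f) :=
  (toDual ℝ E).symm.toLinearIsometry.toContinuousLinearMap.differentiable.comp
    ((hf.fderiv_right (m := 1) (by norm_num)).differentiable one_ne_zero)

lemma norm_gradient_le_of_norm_fderiv_gradient_le (hf : ContDiff ℝ 2 f) (hf0 : gradient f 0 = 0)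
    (hH : ∀ x, ‖x‖ ≤ r → ‖fderiv ℝ (gradient f) x‖ ≤ M) {y : E} (hy : ‖y‖ ≤ r) :
    ‖gradient f y‖ ≤ M * ‖y‖ := by
  have hr : 0 ≤ r := (norm_nonneg y).trans hy
  simpa [hf0] using (convex_closedBall (0 : E) r).norm_image_sub_le_of_norm_fderiv_le
    (fun x _ => differentiable_gradient_of_contDiff_two hf x)
    (fun x hx => hH x (mem_closedBall_zero_iff.mp hx))
    (mem_closedBall_self hr) (mem_closedBall_zero_iff.mpr hy)

lemma abs_sub_le_of_norm_fderiv_gradient_le (hf : ContDiff ℝ 2 f) (hf0 : gradient f 0 = 0)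
    (hH : ∀ x, ‖x‖ ≤ r → ‖fderiv ℝ (gradient f) x‖ ≤ M) (hM : 0 ≤ M) {x y : E}
    (hx : ‖x‖ ≤ r) (hy : ‖y‖ ≤ r) :
    |f x - f y| ≤ M * r * ‖x - y‖ := by
  refine (convex_closedBall (0 : E) r).norm_image_sub_le_of_norm_fderiv_le
    (fun z _ => (hf.differentiable (by norm_num)) z) (fun z hz => ?_)
    (mem_closedBall_zero_iff.mpr hy) (mem_closedBall_zero_iff.mpr hx)
  have hz : ‖z‖ ≤ r := mem_closedBall_zero_iff.mp hz
  rw [← toDual_gradient, LinearIsometryEquiv.norm_map]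
  exact (norm_gradient_le_of_norm_fderiv_gradient_le hf hf0 hH hz).trans
    (mul_le_mul_of_nonneg_left hz hM)

end Gradient

lemma norm_convexCombination_sub_le {E ι : Type*} [SeminormedAddCommGroup E] [NormedSpace ℝ E]
    [Fintype ι] {x : E} {y : ι → E} {θ : ι → ℝ} {a b : ℝ}
    (hθ : ∀ j, 0 ≤ θ j ∧ θ j ≤ a) (hy : ∀ j, ‖y j - x‖ ≤ b) :
    ‖(1 - ∑ j, θ j) • x + ∑ j, θ j • y j - x‖ ≤ Fintype.card ι * a * b := by
  have hsum : (1 - ∑ j, θ j) • x + ∑ j, θ j • y j - x = ∑ j, θ j • (y j - x) := by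
    simp only [smul_sub, Finset.sum_sub_distrib, sub_smul, one_smul, Finset.sum_smul]
    abel
  calc ‖(1 - ∑ j, θ j) • x + ∑ j, θ j • y j - x‖ ≤ ∑ j, ‖θ j • (y j - x)‖ :=
        hsum ▸ norm_sum_le _ _
    _ ≤ ∑ _j : ι, a * b := Finset.sum_le_sum fun j _ => by
        rw [norm_smul, Real.norm_of_nonneg (hθ j).1]
        exact mul_le_mul (hθ j).2 (hy j) (norm_nonneg _) ((hθ j).1.trans (hθ j).2)
    _ = Fintype.card ι * a * b := by simp [mul_assoc]

lemma convexCombination_cone_eq {E F ι : Type*} [AddCommGroup E] [Module ℝ E]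
    [AddCommGroup F] [Module ℝ F] [Fintype ι] [DecidableEq ι]
    (x : E) (s : F) (y : ι → E) (t : ι → F) (θ : ι → ℝ) :
    (1 - ∑ j, θ j) • ((x, s, 0) : E × F × EuclideanSpace ℝ ι) +
        ∑ j, θ j • ((y j, t j, EuclideanSpace.single j 1) : E × F × EuclideanSpace ℝ ι) =
      ((1 - ∑ j, θ j) • x + ∑ j, θ j • y j, (1 - ∑ j, θ j) • s + ∑ j, θ j • t j,
        WithLp.toLp 2 θ) := by
  refine Prod.ext ?_ (Prod.ext ?_ ?_)
  · simp [Prod.fst_sum]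
  · simp [Prod.snd_sum, Prod.fst_sum]
  · ext i
    simp [Prod.snd_sum, Pi.single_apply]

theorem stmt_18_general (n k : ℕ)
    (M M' L : ℝ) (hM : 0 < M) (hM' : 0 < M') (hL : 0 < L) :
    ∃ C > (0 : ℝ),
      ∀ (G₀ : EuclideanSpace ℝ (Fin (n - 1)) → ℝ)
        (G : Fin k → EuclideanSpace ℝ (Fin (n - 1)) → ℝ)
        (h : Fin k → EuclideanSpace ℝ (Fin (n - 1)) → EuclideanSpace ℝ (Fin (n - 1))),
        ContDiff ℝ 2 G₀ → gradient G₀ 0 = 0 → G₀ 0 = 0 →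
        (∀ x : EuclideanSpace ℝ (Fin (n - 1)), ‖x‖ ≤ 1 →
          ‖fderiv ℝ (gradient G₀) x‖ ≤ M) →
        (∀ j, ∀ ξ : EuclideanSpace ℝ (Fin (n - 1)), ‖ξ‖ ≤ 1 →
          ‖h j ξ - ξ‖ ≤ L * ‖ξ‖) →
        (∀ ξ : EuclideanSpace ℝ (Fin (n - 1)), ‖ξ‖ ≤ 1 → |G₀ ξ| ≤ M * ‖ξ‖ ^ 2) →
        (∀ j, ∀ ξ : EuclideanSpace ℝ (Fin (n - 1)), ‖ξ‖ ≤ 1 →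
          |G j (h j ξ)| ≤ M' * ‖ξ‖ ^ 2) →
        ∀ (δ μ ε : ℝ), 0 < δ → δ ≤ 1 → 0 < μ → 0 < ε →
          δ ^ μ ≤ 1 / 2 → (k : ℝ) * L * δ ^ (ε / 2) ≤ 1 →
        ∀ (ξ : EuclideanSpace ℝ (Fin (n - 1))) (θ : Fin k → ℝ),
          ‖ξ‖ ≤ δ ^ μ → (∀ j, 0 ≤ θ j ∧ θ j ≤ δ ^ (ε / 2)) →
          -- the cone point, with `P₀(ξ) = (ξ, G₀(ξ), 0)` and
          -- `P_j(ξ) = (h_j(ξ), G_j(h_j(ξ)), e_j)` in `ℝ^{n-1} × ℝ × ℝ^k`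
          ∃ (η : EuclideanSpace ℝ (Fin (n - 1))) (t : Fin k → ℝ),
            ‖η‖ ≤ 2 * δ ^ μ ∧ (∀ j, t j ∈ Set.Icc (0 : ℝ) (δ ^ (ε / 2))) ∧
            dist
              ((1 - ∑ j, θ j) • ((ξ, G₀ ξ, 0) :
                  EuclideanSpace ℝ (Fin (n - 1)) × ℝ × EuclideanSpace ℝ (Fin k)) +
                ∑ j, θ j • ((h j ξ, G j (h j ξ), EuclideanSpace.single j 1) :
                  EuclideanSpace ℝ (Fin (n - 1)) × ℝ × EuclideanSpace ℝ (Fin k)))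
              ((η, G₀ η, (WithLp.toLp 2 t : EuclideanSpace ℝ (Fin k)))) ≤ C * δ ^ (2 * μ + ε / 2) := by
  refine ⟨k * (M + M' + 2 * M * L) + 1, by positivity, ?_⟩
  intro G₀ G h hG₀ hG₀_crit _ hHess hh hG₀_le hG_le δ μ ε hδ _ _ _ hδμ_half hkL ξ θ hξ hθ
  set ρ := δ ^ μ
  set τ := δ ^ (ε / 2)
  have hρ : 0 < ρ := Real.rpow_pos_of_pos hδ μ
  have hξ1 : ‖ξ‖ ≤ 1 := by linarith
  set η := (1 - ∑ j, θ j) • ξ + ∑ j, θ j • h j ξ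
  have hηξ : ‖η - ξ‖ ≤ k * τ * (L * ρ) := by
    simpa only [Fintype.card_fin] using norm_convexCombination_sub_le (b := L * ρ) hθ fun j =>
      (hh j ξ hξ1).trans (by gcongr)
  have hη : ‖η‖ ≤ 2 * ρ := by
    have := norm_le_norm_add_norm_sub' η ξ
    nlinarith
  have hG_sub : ∀ j, ‖G j (h j ξ) - G₀ ξ‖ ≤ (M + M') * ρ ^ 2 := fun j => by
    have := abs_sub (G j (h j ξ)) (G₀ ξ)
    have : ‖ξ‖ ^ 2 ≤ ρ ^ 2 := by gcongr
    rw [Real.norm_eq_abs]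
    nlinarith [hG_le j ξ hξ1, hG₀_le ξ hξ1]
  have hB := norm_convexCombination_sub_le hθ hG_sub
  rw [Fintype.card_fin] at hB
  have hG₀ηξ := abs_sub_le_of_norm_fderiv_gradient_le hG₀ hG₀_crit
    (fun x hx => hHess x (hx.trans (by linarith))) hM.le hη (by linarith : ‖ξ‖ ≤ 2 * ρ)
  refine ⟨η, θ, hη, hθ, ?_⟩
  rw [convexCombination_cone_eq, Prod.dist_eq, Prod.dist_eq, dist_self, dist_self,
    max_eq_left dist_nonneg, max_eq_right dist_nonneg, Real.dist_eq]
  have hpow : δ ^ (2 * μ + ε / 2) = ρ * ρ * τ := by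
    rw [show 2 * μ + ε / 2 = μ + μ + ε / 2 by ring, Real.rpow_add hδ, Real.rpow_add hδ]
  have hτ : 0 < τ := Real.rpow_pos_of_pos hδ _
  simp only [Real.norm_eq_abs, smul_eq_mul] at hB ⊢
  calc _ ≤ |(1 - ∑ j, θ j) * G₀ ξ + ∑ j, θ j * G j (h j ξ) - G₀ ξ| + |G₀ η - G₀ ξ| := by
        rw [abs_sub_comm (G₀ η)]
        exact abs_sub_le _ _ _
    _ ≤ k * τ * ((M + M') * ρ ^ 2) + M * (2 * ρ) * (k * τ * (L * ρ)) :=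
        add_le_add hB (hG₀ηξ.trans (by gcongr))
    _ ≤ _ := by
        rw [hpow]
        nlinarith [mul_pos (mul_pos hρ hρ) hτ]

/-- every point of the truncated `k`-cone piece
`{(1−Σθ_j)P₀(ξ') + Σθ_j P_j(ξ')}` lies within `C δ^{2μ+ε/2}` of the cylinder
`{(η', G₀(η'), t) : |η'| ≤ 2δ^μ, t ∈ [0, δ^{ε/2}]^k}`. -/
theorem stmt_18 (n k : ℕ) (hn : 2 ≤ n) (hk : 1 ≤ k)
    (M M' L : ℝ) (hM : 0 < M) (hM' : 0 < M') (hL : 0 < L) :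
    ∃ C > (0 : ℝ),
      ∀ (G₀ : EuclideanSpace ℝ (Fin (n - 1)) → ℝ)
        (G : Fin k → EuclideanSpace ℝ (Fin (n - 1)) → ℝ)
        (h : Fin k → EuclideanSpace ℝ (Fin (n - 1)) → EuclideanSpace ℝ (Fin (n - 1))),
        ContDiff ℝ 2 G₀ → gradient G₀ 0 = 0 → G₀ 0 = 0 →
        (∀ x : EuclideanSpace ℝ (Fin (n - 1)), ‖x‖ ≤ 1 →
          ‖fderiv ℝ (gradient G₀) x‖ ≤ M) →
        (∀ j, ∀ ξ : EuclideanSpace ℝ (Fin (n - 1)), ‖ξ‖ ≤ 1 →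
          ‖h j ξ - ξ‖ ≤ L * ‖ξ‖) →
        (∀ ξ : EuclideanSpace ℝ (Fin (n - 1)), ‖ξ‖ ≤ 1 → |G₀ ξ| ≤ M * ‖ξ‖ ^ 2) →
        (∀ j, ∀ ξ : EuclideanSpace ℝ (Fin (n - 1)), ‖ξ‖ ≤ 1 →
          |G j (h j ξ)| ≤ M' * ‖ξ‖ ^ 2) →
        ∀ (δ μ ε : ℝ), 0 < δ → δ ≤ 1 → 0 < μ → 0 < ε →
          δ ^ μ ≤ 1 / 2 → (k : ℝ) * L * δ ^ (ε / 2) ≤ 1 →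
        ∀ (ξ : EuclideanSpace ℝ (Fin (n - 1))) (θ : Fin k → ℝ),
          ‖ξ‖ ≤ δ ^ μ → (∀ j, 0 ≤ θ j ∧ θ j ≤ δ ^ (ε / 2)) →
          -- the cone point, with `P₀(ξ) = (ξ, G₀(ξ), 0)` and
          -- `P_j(ξ) = (h_j(ξ), G_j(h_j(ξ)), e_j)` in `ℝ^{n-1} × ℝ × ℝ^k`
          ∃ (η : EuclideanSpace ℝ (Fin (n - 1))) (t : Fin k → ℝ),
            ‖η‖ ≤ 2 * δ ^ μ ∧ (∀ j, t j ∈ Set.Icc (0 : ℝ) (δ ^ (ε / 2))) ∧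
            dist
              ((1 - ∑ j, θ j) • ((ξ, G₀ ξ, 0) :
                  EuclideanSpace ℝ (Fin (n - 1)) × ℝ × EuclideanSpace ℝ (Fin k)) +
                ∑ j, θ j • ((h j ξ, G j (h j ξ), EuclideanSpace.single j 1) :
                  EuclideanSpace ℝ (Fin (n - 1)) × ℝ × EuclideanSpace ℝ (Fin k)))
              ((η, G₀ η, (WithLp.toLp 2 t : EuclideanSpace ℝ (Fin k)))) ≤ C * δ ^ (2 * μ + ε / 2) :=
  stmt_18_general n k M M' L hM hM' hL
end
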